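/- arXiv:2312.13983 — 3 statements merged into one kernel-verified Lean document; each statement's English description precedes it below -/
import Mathlib

section
/- (Vector-valued Riesz–Krein extension theorem) Let C ⊆ V and D ⊆ W be closed convex cones in finite-dimensional real vector spaces with D sharp, and let U ⊆ V be a linear subspace that intersects the interior of C. Let Ψ: U → W be a linear map with Ψ(C ∩ U) ⊆ D. Then Ψ admits an extension to a linear map Φ: V → W with Φ|_U = Ψ and Φ(C) ⊆ D if and only if (Ψ ⊗ id_{W'}) maps (C ⊗min D^∨) ∩ (U ⊗ W') into D ⊗min D^∨. In particular, when W = ℝ and D = ℝ_{≥0}, every linear functional on U that is nonnegative on C ∩ U extends to a linear functional on V that is nonnegative on C. -/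
open scoped TensorProduct

noncomputable section

/-- A convex cone: a set closed under addition and multiplication by nonnegative reals. -/
def IsConvexCone {V : Type*} [AddCommGroup V] [Module ℝ V] (C : Set V) : Prop :=
  (∀ x ∈ C, ∀ y ∈ C, x + y ∈ C) ∧ ∀ r : ℝ, 0 ≤ r → ∀ x ∈ C, r • x ∈ C

/-- The dual cone `C^∨ ⊆ V'` of a set `C ⊆ V`. -/
def dualCone {V : Type*} [AddCommGroup V] [Module ℝ V] (C : Set V) :
    Set (Module.Dual ℝ V) := {φ | ∀ c ∈ C, 0 ≤ φ c}

/-- The minimal tensor product `C ⊗min D = { Σᵢ cᵢ ⊗ dᵢ | cᵢ ∈ C, dᵢ ∈ D }`. -/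
def minTensor {V W : Type*} [AddCommGroup V] [Module ℝ V] [AddCommGroup W] [Module ℝ W]
    (C : Set V) (D : Set W) : Set (TensorProduct ℝ V W) :=
  (AddSubmonoid.closure {x | ∃ c ∈ C, ∃ d ∈ D, x = c ⊗ₜ[ℝ] d} : AddSubmonoid _)

/-!
A linear map `Φ : V → W` is the same as the functional `g (v ⊗ φ) = φ (Φ v)` on `V ⊗ W'`.
Since `D` is closed, `D = D^∨∨` (bipolar theorem), so `Φ (C) ⊆ D` iff `g ≥ 0` on
`C ⊗min D^∨`; and `Φ` extends `Ψ` iff `g` extends the functional `y ↦ ⟨(Ψ ⊗ id) y⟩` on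
`U ⊗ W'`. The tensor condition says that this functional is nonnegative on
`(C ⊗min D^∨) ∩ (U ⊗ W')`, so the vector-valued problem becomes the scalar Riesz extension
problem for the cone `C ⊗min D^∨` and the subspace `U ⊗ W'`. Riesz's hypothesis, that every
tensor lies in `C ⊗min D^∨ + U ⊗ W'`, follows from `V = C + U` (`U` contains an interior point
of `C`) and `W' = D^∨ - D^∨` (`D` is closed and sharp).
-/

open TensorProduct Topology

section Cones

variable {V W : Type*} [AddCommGroup V] [Module ℝ V] [AddCommGroup W] [Module ℝ W]

namespace IsConvexCone

lemma zero_mem {C : Set V} (hC : IsConvexCone C) (hne : C.Nonempty) : (0 : V) ∈ C := by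
  obtain ⟨c, hc⟩ := hne
  simpa using hC.2 0 le_rfl c hc

def toPointedCone {C : Set V} (hC : IsConvexCone C) (h0 : (0 : V) ∈ C) : PointedCone ℝ V where
  carrier := C
  add_mem' hx hy := hC.1 _ hx _ hy
  zero_mem' := h0
  smul_mem' r _ hx := hC.2 r r.2 _ hx

lemma exists_sub_of_span_eq_top {K : Set V} (hK : IsConvexCone K) (h0 : (0 : V) ∈ K)
    (hspan : Submodule.span ℝ K = ⊤) (x : V) : ∃ a ∈ K, ∃ b ∈ K, x = a - b := by
  rcases subsingleton_or_nontrivial V with _ | _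
  · exact ⟨0, h0, 0, h0, Subsingleton.elim _ _⟩
  · have hrep := ConvexCone.IsReproducing.of_span_eq_top
      (C := (hK.toPointedCone h0).toConvexCone) hspan
    obtain ⟨a, ha, b, hb, hab⟩ := Set.mem_sub.1 (hrep ▸ Set.mem_univ x)
    exact ⟨a, ha, b, hb, hab.symm⟩

end IsConvexCone

lemma isConvexCone_dualCone (D : Set W) : IsConvexCone (dualCone D) :=
  ⟨fun _ hφ _ hψ d hd => add_nonneg (hφ d hd) (hψ d hd),
    fun _ hr _ hφ d hd => mul_nonneg hr (hφ d hd)⟩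

lemma zero_mem_dualCone (D : Set W) : (0 : Module.Dual ℝ W) ∈ dualCone D := fun _ _ => le_rfl

end Cones

section MinTensor

variable {V W V' W' X : Type*} [AddCommGroup V] [Module ℝ V] [AddCommGroup W] [Module ℝ W]
  [AddCommGroup V'] [Module ℝ V'] [AddCommGroup W'] [Module ℝ W'] [AddCommGroup X] [Module ℝ X]

lemma tmul_mem_minTensor {C : Set V} {D : Set W} {c : V} {d : W} (hc : c ∈ C) (hd : d ∈ D) :
    c ⊗ₜ[ℝ] d ∈ minTensor C D :=
  AddSubmonoid.subset_closure ⟨c, hc, d, hd, rfl⟩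

lemma minTensor_subset {C : Set V} {D : Set W} {S : AddSubmonoid (V ⊗[ℝ] W)}
    (h : ∀ c ∈ C, ∀ d ∈ D, c ⊗ₜ[ℝ] d ∈ S) : minTensor C D ⊆ S :=
  AddSubmonoid.closure_le.2 fun _ ⟨c, hc, d, hd, e⟩ => e ▸ h c hc d hd

lemma map_mem_minTensor {C : Set V} {D : Set W} {C' : Set V'} {D' : Set W'}
    {f : V →ₗ[ℝ] V'} {g : W →ₗ[ℝ] W'} (hf : Set.MapsTo f C C') (hg : Set.MapsTo g D D')
    {z : V ⊗[ℝ] W} (hz : z ∈ minTensor C D) : map f g z ∈ minTensor C' D' :=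
  minTensor_subset (S := (AddSubmonoid.closure _).comap (map f g))
    (fun c hc d hd => AddSubmonoid.mem_comap.2 <| by
      rw [map_tmul]
      exact tmul_mem_minTensor (hf hc) (hg hd)) hz

lemma IsConvexCone.minTensor {C : Set V} (hC : IsConvexCone C) (D : Set W) :
    IsConvexCone (minTensor C D) := by
  refine ⟨fun _ hx _ hy => AddSubmonoid.add_mem _ hx hy, fun r hr z hz => ?_⟩
  have := map_mem_minTensor (f := r • LinearMap.id) (g := LinearMap.id)
    (fun c hc => hC.2 r hr c hc) (fun _ hd => hd) hz
  rwa [map_smul_left, map_id] at this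

lemma zero_mem_minTensor (C : Set V) (D : Set W) : (0 : V ⊗[ℝ] W) ∈ minTensor C D :=
  AddSubmonoid.zero_mem _

lemma contractRight_nonneg_of_mem_minTensor {D : Set W} {z : W ⊗[ℝ] Module.Dual ℝ W}
    (hz : z ∈ minTensor D (dualCone D)) : 0 ≤ contractRight ℝ W z :=
  minTensor_subset (C := D) (D := dualCone D)
    (S := (Subsemiring.nonneg ℝ).toAddSubmonoid.comap (contractRight ℝ W))
    (fun d hd _ hφ => hφ d hd) hz

lemma exists_mem_minTensor_sub_mem_range {C : Set V} {K : Set X} {U : Submodule ℝ V}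
    (hCU : ∀ v, ∃ c ∈ C, v - c ∈ U) (hK : ∀ x, ∃ a ∈ K, ∃ b ∈ K, x = a - b) (z : V ⊗[ℝ] X) :
    ∃ w ∈ minTensor C K, z - w ∈ LinearMap.range (map U.subtype (LinearMap.id : X →ₗ[ℝ] X)) := by
  induction z using TensorProduct.induction_on with
  | zero => exact ⟨0, zero_mem_minTensor C K, by simp⟩
  | tmul v x =>
    obtain ⟨a, ha, b, hb, rfl⟩ := hK x
    obtain ⟨c, hc, hvc⟩ := hCU v
    obtain ⟨c', hc', hvc'⟩ := hCU (-v)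
    refine ⟨c ⊗ₜ a + c' ⊗ₜ b,
      AddSubmonoid.add_mem _ (tmul_mem_minTensor hc ha) (tmul_mem_minTensor hc' hb),
      (⟨v - c, hvc⟩ : U) ⊗ₜ a + (⟨-v - c', hvc'⟩ : U) ⊗ₜ b, ?_⟩
    simp only [map_add, map_tmul, Submodule.subtype_apply, LinearMap.id_apply, sub_tmul,
      tmul_sub, neg_tmul]
    abel
  | add z₁ z₂ ih₁ ih₂ =>
    obtain ⟨w₁, hw₁, h₁⟩ := ih₁
    obtain ⟨w₂, hw₂, h₂⟩ := ih₂
    refine ⟨w₁ + w₂, AddSubmonoid.add_mem _ hw₁ hw₂, ?_⟩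
    rw [add_sub_add_comm]
    exact add_mem h₁ h₂

end MinTensor

section ClosedCones

variable {V : Type*} [AddCommGroup V] [Module ℝ V] [TopologicalSpace V]

lemma exists_mem_sub_mem_of_mem_interior [ContinuousAdd V] [ContinuousSMul ℝ V] {C : Set V}
    (hC : IsConvexCone C) {U : Submodule ℝ V} {u : V} (huU : u ∈ U) (huC : u ∈ interior C)
    (v : V) : ∃ c ∈ C, v - c ∈ U := by
  have hcont : Filter.Tendsto (fun t : ℝ => u + t • v) (𝓝 0) (𝓝 u) :=
    ((continuous_id.smul (continuous_const (y := v))).const_add u).tendsto' 0 u (by simp)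
  obtain ⟨t, hutv, ht⟩ := ((hcont.eventually (mem_interior_iff_mem_nhds.1 huC)).filter_mono
    nhdsWithin_le_nhds |>.and (self_mem_nhdsWithin (s := Set.Ioi 0))).exists
  refine ⟨t⁻¹ • (u + t • v), hC.2 _ (inv_nonneg.2 ht.le) _ hutv, ?_⟩
  have : v - t⁻¹ • (u + t • v) = -(t⁻¹ • u) := by
    rw [smul_add, smul_smul, inv_mul_cancel₀ ht.ne', one_smul]; abel
  rw [this]
  exact U.neg_mem (U.smul_mem _ huU)

variable [IsTopologicalAddGroup V] [ContinuousSMul ℝ V] [T2Space V] [FiniteDimensional ℝ V]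

theorem FiniteDimensional.locallyConvexSpace : LocallyConvexSpace ℝ V :=
  let e := (Module.finBasis ℝ V).equivFun.toContinuousLinearEquiv
  Topology.IsInducing.locallyConvexSpace (f := (e : V →ₗ[ℝ] Fin (Module.finrank ℝ V) → ℝ))
    e.toHomeomorph.isInducing

theorem mem_of_forall_dualCone_nonneg {D : Set V} (hD : IsConvexCone D) (hD0 : (0 : V) ∈ D)
    (hDcl : IsClosed D) {w : V} (hw : ∀ φ ∈ dualCone D, 0 ≤ φ w) : w ∈ D := by
  have := FiniteDimensional.locallyConvexSpace (V := V)
  by_contra hwD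
  obtain ⟨f, hfD, hfw⟩ :=
    ProperCone.hyperplane_separation_point ⟨hD.toPointedCone hD0, hDcl⟩ hwD
  exact (hw f hfD).not_gt hfw

theorem span_dualCone_eq_top {D : Set V} (hD : IsConvexCone D) (hD0 : (0 : V) ∈ D)
    (hDcl : IsClosed D) (hDsharp : ∀ x ∈ D, -x ∈ D → x = 0) :
    Submodule.span ℝ (dualCone D) = ⊤ := by
  set N := Submodule.span ℝ (dualCone D)
  have hN : N.dualCoannihilator = ⊥ := by
    refine (Submodule.eq_bot_iff _).2 fun w hw => ?_
    have hφw : ∀ φ ∈ dualCone D, φ w = 0 := fun φ hφ =>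
      (Submodule.mem_dualCoannihilator w).1 hw φ (Submodule.subset_span hφ)
    refine hDsharp w (mem_of_forall_dualCone_nonneg hD hD0 hDcl fun φ hφ => (hφw φ hφ).ge)
      (mem_of_forall_dualCone_nonneg hD hD0 hDcl fun φ hφ => ?_)
    rw [map_neg, hφw φ hφ, neg_zero]
  rw [← Subspace.dualCoannihilator_dualAnnihilator_eq (W := N), hN, Submodule.dualAnnihilator_bot]

end ClosedCones

theorem PointedCone.exists_nonneg_extension_of_forall_exists_sub_mem {E : Type*}
    [AddCommGroup E] [Module ℝ E] (s : PointedCone ℝ E) (M : Submodule ℝ E) (f : M →ₗ[ℝ] ℝ)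
    (hf : ∀ x : M, (x : E) ∈ s → 0 ≤ f x) (hsM : ∀ z, ∃ c ∈ s, z - c ∈ M) :
    ∃ g : E →ₗ[ℝ] ℝ, (∀ x : M, g x = f x) ∧ ∀ x ∈ s, 0 ≤ g x :=
  riesz_extension s ⟨M, f⟩ hf fun z => by
    obtain ⟨c, hc, hzc⟩ := hsM z
    exact ⟨-⟨z - c, hzc⟩, by simpa using hc⟩

theorem exists_dual_apply_eq_tmul {V W : Type*} [AddCommGroup V] [Module ℝ V] [AddCommGroup W]
    [Module ℝ W] [FiniteDimensional ℝ W] (g : V ⊗[ℝ] Module.Dual ℝ W →ₗ[ℝ] ℝ) :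
    ∃ Φ : V →ₗ[ℝ] W, ∀ v φ, φ (Φ v) = g (v ⊗ₜ φ) :=
  ⟨(Module.evalEquiv ℝ W).symm.toLinearMap ∘ₗ curry g, fun v φ => by simp⟩

section Extension

variable {V W : Type*} [AddCommGroup V] [Module ℝ V] [AddCommGroup W] [Module ℝ W]
  [FiniteDimensional ℝ W] [TopologicalSpace W] [IsTopologicalAddGroup W] [ContinuousSMul ℝ W]
  [T2Space W]

theorem exists_extension_of_map_minTensor_subset {C : Set V} {D : Set W} (hC : IsConvexCone C)
    (hD : IsConvexCone D) (hD0 : (0 : W) ∈ D) (hDcl : IsClosed D)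
    (hDsharp : ∀ x ∈ D, -x ∈ D → x = 0) {U : Submodule ℝ V} (hCU : ∀ v, ∃ c ∈ C, v - c ∈ U)
    (Ψ : U →ₗ[ℝ] W)
    (hΨ : ∀ y : U ⊗[ℝ] Module.Dual ℝ W, map U.subtype LinearMap.id y ∈ minTensor C (dualCone D) →
      map Ψ LinearMap.id y ∈ minTensor D (dualCone D)) :
    ∃ Φ : V →ₗ[ℝ] W, (∀ u : U, Φ u = Ψ u) ∧ ∀ c ∈ C, Φ c ∈ D := by
  set ι : U ⊗[ℝ] Module.Dual ℝ W →ₗ[ℝ] V ⊗[ℝ] Module.Dual ℝ W := map U.subtype LinearMap.id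
  have hι : Function.Injective ι :=
    Module.Flat.rTensor_preserves_injective_linearMap _ U.injective_subtype
  let e := LinearEquiv.ofInjective ι hι
  let f : LinearMap.range ι →ₗ[ℝ] ℝ := contractRight ℝ W ∘ₗ map Ψ LinearMap.id ∘ₗ e.symm
  have hfe : ∀ y, f (e y) = contractRight ℝ W (map Ψ LinearMap.id y) := fun y => by
    simp [f]
  have hf : ∀ x : LinearMap.range ι, (x : V ⊗[ℝ] Module.Dual ℝ W) ∈ minTensor C (dualCone D) →
      0 ≤ f x := by
    intro x hx
    obtain ⟨y, rfl⟩ := e.surjective x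
    rw [hfe]
    exact contractRight_nonneg_of_mem_minTensor (hΨ y hx)
  have hsM := exists_mem_minTensor_sub_mem_range hCU
    ((isConvexCone_dualCone D).exists_sub_of_span_eq_top (zero_mem_dualCone D)
      (span_dualCone_eq_top hD hD0 hDcl hDsharp))
  obtain ⟨g, hgf, hg⟩ := ((hC.minTensor _).toPointedCone
    (zero_mem_minTensor _ _)).exists_nonneg_extension_of_forall_exists_sub_mem _ f hf hsM
  obtain ⟨Φ, hΦ⟩ := exists_dual_apply_eq_tmul g
  refine ⟨Φ, fun u => ?_, fun c hc => mem_of_forall_dualCone_nonneg hD hD0 hDcl fun φ hφ => ?_⟩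
  · refine sub_eq_zero.1 <| (Module.forall_dual_apply_eq_zero_iff ℝ _).1 fun φ => ?_
    have := hgf (e (u ⊗ₜ φ))
    rw [hfe] at this
    simpa [hΦ, sub_eq_zero, ι, e] using this
  · rw [hΦ]
    exact hg _ (tmul_mem_minTensor hc hφ)

end Extension

theorem riesz_krein_vector_valued_general {V W : Type*}
    [AddCommGroup V] [Module ℝ V]
    [TopologicalSpace V] [IsTopologicalAddGroup V] [ContinuousSMul ℝ V]
    [AddCommGroup W] [Module ℝ W] [FiniteDimensional ℝ W]
    [TopologicalSpace W] [IsTopologicalAddGroup W] [ContinuousSMul ℝ W] [T2Space W]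
    (C : Set V) (D : Set W) (hCc : IsConvexCone C) (hDc : IsConvexCone D)
    (hDcl : IsClosed D)
    (hDsharp : ∀ x ∈ D, -x ∈ D → x = 0)
    (U : Submodule ℝ V) (hU : ∃ u ∈ (U : Set V), u ∈ interior C)
    (Ψ : U →ₗ[ℝ] W) (hΨ : ∀ u : U, (u : V) ∈ C → Ψ u ∈ D) :
    ((∃ Φ : V →ₗ[ℝ] W, (∀ u : U, Φ u = Ψ u) ∧ ∀ c ∈ C, Φ c ∈ D) ↔
      ∀ y : TensorProduct ℝ U (Module.Dual ℝ W),
        TensorProduct.map U.subtype LinearMap.id y ∈ minTensor C (dualCone D) →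
        TensorProduct.map Ψ LinearMap.id y ∈ minTensor D (dualCone D)) ∧
    (∀ f : U →ₗ[ℝ] ℝ, (∀ u : U, (u : V) ∈ C → 0 ≤ f u) →
      ∃ g : V →ₗ[ℝ] ℝ, (∀ u : U, g u = f u) ∧ ∀ c ∈ C, 0 ≤ g c) := by
  obtain ⟨u, huU, huC⟩ := hU
  have hCU := exists_mem_sub_mem_of_mem_interior hCc huU huC
  have hC0 : (0 : V) ∈ C := hCc.zero_mem ⟨u, interior_subset huC⟩
  have hD0 : (0 : W) ∈ D := by simpa using hΨ 0 hC0
  refine ⟨⟨fun ⟨Φ, hΦΨ, hΦC⟩ y hy => ?_,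
    exists_extension_of_map_minTensor_subset hCc hDc hD0 hDcl hDsharp hCU Ψ⟩,
    fun f hf => (hCc.toPointedCone hC0).exists_nonneg_extension_of_forall_exists_sub_mem U f hf hCU⟩
  have hΦy := map_mem_minTensor (g := LinearMap.id) hΦC (fun _ hd => hd) hy
  rwa [map_map, show Φ ∘ₗ U.subtype = Ψ from LinearMap.ext hΦΨ, LinearMap.id_comp] at hΦy

/-- vector-valued Riesz–Krein extension theorem: for closed convex cones
`C ⊆ V`, `D ⊆ W` with `D` sharp, a subspace `U ⊆ V` meeting the interior of `C`, and a
linear map `Ψ : U → W` with `Ψ(C ∩ U) ⊆ D`, the map `Ψ` extends to a positive linear map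
`Φ : V → W` iff `Ψ ⊗ id_{W'}` maps `(C ⊗min D^∨) ∩ (U ⊗ W')` into `D ⊗min D^∨`.
In particular (second conjunct), every linear functional on `U` nonnegative on `C ∩ U`
extends to a linear functional on `V` nonnegative on `C`. -/
theorem riesz_krein_vector_valued {V W : Type*}
    [AddCommGroup V] [Module ℝ V] [FiniteDimensional ℝ V]
    [TopologicalSpace V] [IsTopologicalAddGroup V] [ContinuousSMul ℝ V] [T2Space V]
    [AddCommGroup W] [Module ℝ W] [FiniteDimensional ℝ W]
    [TopologicalSpace W] [IsTopologicalAddGroup W] [ContinuousSMul ℝ W] [T2Space W]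
    (C : Set V) (D : Set W) (hCc : IsConvexCone C) (hDc : IsConvexCone D)
    (hCcl : IsClosed C) (hDcl : IsClosed D)
    (hDsharp : ∀ x ∈ D, -x ∈ D → x = 0)
    (U : Submodule ℝ V) (hU : ∃ u ∈ (U : Set V), u ∈ interior C)
    (Ψ : U →ₗ[ℝ] W) (hΨ : ∀ u : U, (u : V) ∈ C → Ψ u ∈ D) :
    ((∃ Φ : V →ₗ[ℝ] W, (∀ u : U, Φ u = Ψ u) ∧ ∀ c ∈ C, Φ c ∈ D) ↔
      ∀ y : TensorProduct ℝ U (Module.Dual ℝ W),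
        TensorProduct.map U.subtype LinearMap.id y ∈ minTensor C (dualCone D) →
        TensorProduct.map Ψ LinearMap.id y ∈ minTensor D (dualCone D)) ∧
    (∀ f : U →ₗ[ℝ] ℝ, (∀ u : U, (u : V) ∈ C → 0 ≤ f u) →
      ∃ g : V →ₗ[ℝ] ℝ, (∀ u : U, g u = f u) ∧ ∀ c ∈ C, 0 ≤ g c) :=
  riesz_krein_vector_valued_general C D hCc hDc hDcl hDsharp U hU Ψ hΨ
end
end

section
/- (Separation/realization theorem for operator systems) Let C be an abstract operator system on a finite-dimensional real vector space X, let s ≥ 1, and let a ∈ X ⊗ Her_s with a ∉ C(s). Then there exist n ≥ 1 and a linear map Ψ: X → Her_n such that (Ψ ⊗ id_{Her_t})(C(t)) ⊆ Psd_{nt} for all t ≥ 1, while (Ψ ⊗ id_{Her_s})(a) ∉ Psd_{ns}. Consequently, every abstract operator system is an intersection of free spectrahedra, i.e., of systems of the form t ↦ (Ψ ⊗ id_{Her_t})^{-1}(Psd_{nt}). -/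
open Matrix
open scoped TensorProduct Kronecker ComplexOrder

noncomputable section

/-- `Her_k`: the real vector space of Hermitian complex matrices indexed by `k`. -/
abbrev HM (k : Type*) [Fintype k] [DecidableEq k] : Type _ := selfAdjoint (Matrix k k ℂ)

section Infrastructure

variable {I J : Type*} [Fintype I] [DecidableEq I] [Fintype J] [DecidableEq J]

/-- The compression map `B ↦ M^* B M : Her_I → Her_J` (ℝ-linear). -/
def compr (M : Matrix I J ℂ) : HM I →ₗ[ℝ] HM J where
  toFun B := ⟨Mᴴ * B.1 * M, Matrix.isHermitian_conjTranspose_mul_mul M B.2⟩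
  map_add' A B := Subtype.ext (by simp [Matrix.mul_add, Matrix.add_mul])
  map_smul' r A := Subtype.ext (by simp [Matrix.mul_smul, Matrix.smul_mul])

/-- The Kronecker product of Hermitian matrices. -/
def kronHerm (A : HM I) (B : HM J) : HM (I × J) :=
  ⟨A.1 ⊗ₖ B.1, by
    have hA : (A.1)ᴴ = A.1 := A.2
    have hB : (B.1)ᴴ = B.1 := B.2
    show star _ = _
    rw [Matrix.star_eq_conjTranspose]
    ext ⟨i1, i2⟩ ⟨j1, j2⟩
    simp only [Matrix.conjTranspose_apply, Matrix.kroneckerMap_apply, star_mul']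
    rw [← Matrix.conjTranspose_apply, ← Matrix.conjTranspose_apply, hA, hB, mul_comm]⟩

def kronBil : HM I →ₗ[ℝ] HM J →ₗ[ℝ] HM (I × J) :=
  LinearMap.mk₂ ℝ kronHerm
    (fun A A' B => Subtype.ext (by simp [kronHerm, Matrix.add_kronecker]))
    (fun r A B => Subtype.ext (by simp [kronHerm, Matrix.smul_kronecker]))
    (fun A B B' => Subtype.ext (by simp [kronHerm, Matrix.kronecker_add]))
    (fun r A B => Subtype.ext (by simp [kronHerm, Matrix.kronecker_smul]))

/-- The identification `Her_I ⊗ Her_J ≅ Her_{I×J}` (via the Kronecker product),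
as a linear map. -/
def kron : TensorProduct ℝ (HM I) (HM J) →ₗ[ℝ] HM (I × J) :=
  TensorProduct.lift kronBil

end Infrastructure

/-- A proper cone: a convex cone that is closed (equivalently, by the bipolar theorem in
finite dimensions, equal to its double dual cone), sharp, and full. -/
def IsProperCone {M : Type*} [AddCommGroup M] [Module ℝ M] (C : Set M) : Prop :=
  (∀ x ∈ C, ∀ y ∈ C, x + y ∈ C) ∧ (∀ r : ℝ, 0 ≤ r → ∀ x ∈ C, r • x ∈ C) ∧
  (∀ x, (∀ f : Module.Dual ℝ M, (∀ c ∈ C, 0 ≤ f c) → 0 ≤ f x) → x ∈ C) ∧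
  (∀ x ∈ C, -x ∈ C → x = 0) ∧ (∀ x : M, ∃ a ∈ C, ∃ b ∈ C, x = a - b)

/-- An abstract operator system on a real vector space `X`: a proper cone
`cone s ⊆ X ⊗ Her_s` for every level `s`, compatible with all matrix compressions. -/
structure AOS (X : Type*) [AddCommGroup X] [Module ℝ X] where
  cone : ∀ s : ℕ, Set (TensorProduct ℝ X (HM (Fin s)))
  proper : ∀ s, IsProperCone (cone s)
  compat : ∀ (s t : ℕ) (M : Matrix (Fin s) (Fin t) ℂ), ∀ A ∈ cone s,
    TensorProduct.map LinearMap.id (compr M) A ∈ cone t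

/-!
Since `C(s)` is closed, a functional `φ` on `X ⊗ Her_s` that is nonnegative on `C(s)` separates
`a`. Representing `B ↦ φ (x ⊗ B)` by a Hermitian matrix `Ψ x` through the pairing
`(P, B) ↦ tr (Pᵀ B)`, the quadratic form of `(Ψ ⊗ id)(w)` at `vec M` is `φ ((id ⊗ M^* · M) w)`.
Every vector is some `vec M`, so `Ψ` is completely positive on `C` by compatibility with
compressions, while `M = 1` recovers `φ a < 0`.
-/

open ComplexStarModule

theorem IsProperCone.exists_dual_nonneg_of_notMem {M : Type*} [AddCommGroup M] [Module ℝ M]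
    {C : Set M} (hC : IsProperCone C) {x : M} (hx : x ∉ C) :
    ∃ f : Module.Dual ℝ M, (∀ c ∈ C, 0 ≤ f c) ∧ f x < 0 := by
  by_contra! h
  exact hx (hC.2.2.1 x h)

section ComplexStarModule

variable {A : Type*} [AddCommGroup A] [Module ℂ A] [StarAddMonoid A] [StarModule ℂ A]

theorem realPart_star (a : A) : ℜ (star a) = ℜ a := by
  ext
  simp [realPart_apply_coe, add_comm]

theorem imaginaryPart_star (a : A) : ℑ (star a) = -ℑ a := by
  ext
  simp [imaginaryPart_apply_coe, ← smul_neg]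

def extendSelfAdjoint (g : Module.Dual ℝ (selfAdjoint A)) : Module.Dual ℂ A :=
  Module.Dual.extendRCLike (g ∘ₗ realPart)

theorem extendSelfAdjoint_apply (g : Module.Dual ℝ (selfAdjoint A)) (a : A) :
    extendSelfAdjoint g a = (g (ℜ a) : ℂ) + Complex.I * g (ℑ a) := by
  simp [extendSelfAdjoint, Module.Dual.extendRCLike_apply, realPart_I_smul]

theorem extendSelfAdjoint_star (g : Module.Dual ℝ (selfAdjoint A)) (a : A) :
    extendSelfAdjoint g (star a) = star (extendSelfAdjoint g a) := by
  simp [extendSelfAdjoint_apply, realPart_star, imaginaryPart_star]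

theorem extendSelfAdjoint_coe (g : Module.Dual ℝ (selfAdjoint A)) (a : selfAdjoint A) :
    extendSelfAdjoint g a = g a := by
  simp [extendSelfAdjoint_apply]

end ComplexStarModule

section DualMatrix

variable {I : Type*} [Fintype I] [DecidableEq I]

def dualMatrix : Module.Dual ℝ (HM I) →ₗ[ℝ] HM I where
  toFun g := ⟨Matrix.of fun i j => extendSelfAdjoint g (Matrix.single i j 1), by
    ext i j
    rw [Matrix.star_apply, Matrix.of_apply, Matrix.of_apply, ← extendSelfAdjoint_star,
      Matrix.star_eq_conjTranspose, Matrix.conjTranspose_single, star_one]⟩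
  map_add' g h := by ext; simp [extendSelfAdjoint_apply]; ring
  map_smul' r g := by ext; simp [extendSelfAdjoint_apply]; ring

theorem dualMatrix_apply (g : Module.Dual ℝ (HM I)) (i j : I) :
    (dualMatrix g : Matrix I I ℂ) i j = extendSelfAdjoint g (Matrix.single i j 1) := rfl

theorem trace_transpose_dualMatrix_mul (g : Module.Dual ℝ (HM I)) (B : HM I) :
    ((dualMatrix g : Matrix I I ℂ)ᵀ * B).trace = g B := by
  have single_eq (i j : I) : Matrix.single i j ((B : Matrix I I ℂ) i j) =
      (B : Matrix I I ℂ) i j • Matrix.single i j 1 := by simp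
  calc ((dualMatrix g : Matrix I I ℂ)ᵀ * B).trace
      = ∑ i, ∑ j, (B : Matrix I I ℂ) i j * extendSelfAdjoint g (Matrix.single i j 1) := by
        simp only [Matrix.trace, Matrix.diag, Matrix.mul_apply, Matrix.transpose_apply,
          dualMatrix_apply, mul_comm]
        exact Finset.sum_comm
    _ = extendSelfAdjoint g (∑ i, ∑ j, Matrix.single i j ((B : Matrix I I ℂ) i j)) := by
        simp only [single_eq, map_sum, map_smul, smul_eq_mul]
    _ = g B := by rw [← Matrix.matrix_eq_sum_single, extendSelfAdjoint_coe]

end DualMatrix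

theorem Matrix.star_vec_dotProduct_kronecker_mulVec_vec {R I J : Type*} [CommSemiring R]
    [StarRing R] [Fintype I] [Fintype J] (P : Matrix I I R) (B : Matrix J J R)
    (M : Matrix J I R) :
    star (vec M) ⬝ᵥ (P ⊗ₖ B) *ᵥ vec M = (Pᵀ * (Mᴴ * B * M)).trace := by
  rw [kronecker_mulVec_vec, star_vec_dotProduct_vec, ← Matrix.mul_assoc, ← Matrix.mul_assoc,
    trace_mul_comm]

section RealizingMap

variable {X : Type*} [AddCommGroup X] [Module ℝ X]
  {I J : Type*} [Fintype I] [DecidableEq I] [Fintype J] [DecidableEq J]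

def realizingMap (φ : Module.Dual ℝ (X ⊗[ℝ] HM I)) : X →ₗ[ℝ] HM I :=
  dualMatrix ∘ₗ TensorProduct.curry φ

theorem star_vec_dotProduct_kron_map_realizingMap_mulVec_vec (φ : Module.Dual ℝ (X ⊗[ℝ] HM I))
    (M : Matrix J I ℂ) (w : X ⊗[ℝ] HM J) :
    star (vec M) ⬝ᵥ (kron (TensorProduct.map (realizingMap φ) LinearMap.id w)).1
      *ᵥ vec M = φ (TensorProduct.map LinearMap.id (compr M) w) := by
  induction w using TensorProduct.induction_on with
  | zero => simp
  | add w w' hw hw' => simp [Matrix.add_mulVec, hw, hw']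
  | tmul x B =>
    simp only [TensorProduct.map_tmul, LinearMap.id_coe, id_eq]
    calc star (vec M) ⬝ᵥ ((realizingMap φ x : Matrix I I ℂ) ⊗ₖ (B : Matrix J J ℂ)) *ᵥ vec M
        = ((realizingMap φ x : Matrix I I ℂ)ᵀ * (compr M B : Matrix I I ℂ)).trace :=
          Matrix.star_vec_dotProduct_kronecker_mulVec_vec _ _ _
      _ = φ (x ⊗ₜ compr M B) := trace_transpose_dualMatrix_mul _ _

theorem posSemidef_kron_map_realizingMap_iff (φ : Module.Dual ℝ (X ⊗[ℝ] HM I))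
    (w : X ⊗[ℝ] HM J) :
    (kron (TensorProduct.map (realizingMap φ) LinearMap.id w)).1.PosSemidef ↔
      ∀ M : Matrix J I ℂ, 0 ≤ φ (TensorProduct.map LinearMap.id (compr M) w) := by
  rw [Matrix.posSemidef_iff_dotProduct_mulVec, Matrix.vec_bijective.surjective.forall]
  simp only [star_vec_dotProduct_kron_map_realizingMap_mulVec_vec, Complex.zero_le_real]
  exact and_iff_right (kron _).2

end RealizingMap

theorem compr_one {I : Type*} [Fintype I] [DecidableEq I] :
    compr (1 : Matrix I I ℂ) = LinearMap.id := by
  ext B : 2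
  simp [compr]

theorem AOS.exists_separating_map {X : Type*} [AddCommGroup X] [Module ℝ X] (C : AOS X)
    {s : ℕ} {a : X ⊗[ℝ] HM (Fin s)} (ha : a ∉ C.cone s) :
    ∃ n, 1 ≤ n ∧ ∃ Ψ : X →ₗ[ℝ] HM (Fin n),
      (∀ t, ∀ A ∈ C.cone t, (kron (TensorProduct.map Ψ LinearMap.id A)).1.PosSemidef) ∧
      ¬ (kron (TensorProduct.map Ψ LinearMap.id a)).1.PosSemidef := by
  obtain ⟨φ, hφC, hφa⟩ := (C.proper s).exists_dual_nonneg_of_notMem ha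
  have hs : 1 ≤ s := by
    refine Nat.one_le_iff_ne_zero.mpr ?_
    rintro rfl
    -- `X ⊗ Her_0` is trivial and fullness makes `C(0)` nonempty
    obtain ⟨b, hb, -⟩ := (C.proper 0).2.2.2.2 0
    exact ha (Subsingleton.elim b a ▸ hb)
  refine ⟨s, hs, realizingMap φ, fun t A hA => ?_, fun ha_psd => ?_⟩
  · exact (posSemidef_kron_map_realizingMap_iff φ A).mpr fun M => hφC _ (C.compat t s M A hA)
  · have hφa_nonneg := (posSemidef_kron_map_realizingMap_iff φ a).mp ha_psd 1
    rw [compr_one, TensorProduct.map_id, LinearMap.id_apply] at hφa_nonneg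
    exact hφa.not_ge hφa_nonneg

theorem separation_realization_general {X : Type*} [AddCommGroup X] [Module ℝ X]
    (C : AOS X) (s : ℕ)
    (a : TensorProduct ℝ X (HM (Fin s))) (ha : a ∉ C.cone s) :
    (∃ (n : ℕ), 1 ≤ n ∧ ∃ Ψ : X →ₗ[ℝ] HM (Fin n),
      (∀ t : ℕ, ∀ A ∈ C.cone t,
        (kron (TensorProduct.map Ψ LinearMap.id A)).1.PosSemidef) ∧
      ¬ (kron (TensorProduct.map Ψ LinearMap.id a)).1.PosSemidef) ∧
    (∀ t : ℕ, C.cone t =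
      {A : TensorProduct ℝ X (HM (Fin t)) |
        ∀ (n : ℕ) (Ψ : X →ₗ[ℝ] HM (Fin n)),
          (∀ u : ℕ, ∀ B ∈ C.cone u,
            (kron (TensorProduct.map Ψ LinearMap.id B)).1.PosSemidef) →
          (kron (TensorProduct.map Ψ LinearMap.id A)).1.PosSemidef}) := by
  refine ⟨C.exists_separating_map ha, fun t => Set.ext fun A => ⟨?_, ?_⟩⟩
  · exact fun hA n Ψ hΨ => hΨ t A hA
  · intro hA
    by_contra hA_notMem
    obtain ⟨n, -, Ψ, hΨC, hΨA⟩ := C.exists_separating_map hA_notMem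
    exact hΨA (hA n Ψ hΨC)

/-- separation/realization theorem: if `a ∉ C(s)`, there are `n ≥ 1` and a
linear map `Ψ : X → Her_n` which is completely positive into the psd system but with
`(Ψ ⊗ id_{Her_s})(a)` not positive semidefinite.  Consequently every abstract operator
system is the intersection of the free spectrahedra containing it. -/
theorem separation_realization {X : Type*} [AddCommGroup X] [Module ℝ X]
    [FiniteDimensional ℝ X] (C : AOS X) (s : ℕ)
    (a : TensorProduct ℝ X (HM (Fin s))) (ha : a ∉ C.cone s) :
    (∃ (n : ℕ), 1 ≤ n ∧ ∃ Ψ : X →ₗ[ℝ] HM (Fin n),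
      (∀ t : ℕ, ∀ A ∈ C.cone t,
        (kron (TensorProduct.map Ψ LinearMap.id A)).1.PosSemidef) ∧
      ¬ (kron (TensorProduct.map Ψ LinearMap.id a)).1.PosSemidef) ∧
    (∀ t : ℕ, C.cone t =
      {A : TensorProduct ℝ X (HM (Fin t)) |
        ∀ (n : ℕ) (Ψ : X →ₗ[ℝ] HM (Fin n)),
          (∀ u : ℕ, ∀ B ∈ C.cone u,
            (kron (TensorProduct.map Ψ LinearMap.id B)).1.PosSemidef) →
          (kron (TensorProduct.map Ψ LinearMap.id A)).1.PosSemidef}) :=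
  separation_realization_general C s a ha
end
end

section
/- (Inclusion detected at one level) Let C be an abstract operator system on X = Her_d, and identify Her_d ⊗ Her_s with Her_{ds} via the Kronecker product. Then: (i) if C(d) ⊆ Psd_{d²}, then C(s) ⊆ Psd_{ds} for all s ≥ 1; (ii) if Psd_{d²} ⊆ C(d), then Psd_{ds} ⊆ C(s) for all s ≥ 1. -/
/-!
Both inclusions reduce to the single matrix `ω ω^*` at level `d`, where `ω = ∑ᵢ eᵢ ⊗ eᵢ` is the
maximally entangled vector. Every vector `v` of `ℂ^d ⊗ ℂ^s` is `(1 ⊗ M) ω` for the reshaping `M`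
of `v`, so a matrix on `ℂ^d ⊗ ℂ^s` is positive semidefinite as soon as all its compressions
`(1 ⊗ M)^* K (1 ⊗ M)` to `ℂ^d ⊗ ℂ^d` are; this gives (i). Conversely every positive semidefinite
matrix on `ℂ^d ⊗ ℂ^s` is a sum of rank-one matrices `v v^* = (1 ⊗ M) ω ω^* (1 ⊗ M)^*`, i.e. of
compressions of `ω ω^*`, which gives (ii) once the Kronecker identification
`Her_d ⊗ Her_s ≅ Her_{ds}` is known to be bijective: onto because `ℜ (X ⊗ Y) = ℜX ⊗ ℜY - ℑX ⊗ ℑY`,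
and one-to-one because each entry slice of `∑ₖ bₖ ⊗ yₖ`, for a real basis `bₖ` of `Her_d`, is a
complex combination of the `bₖ` whose real and imaginary parts vanish separately.
-/

open Matrix
open scoped TensorProduct Kronecker ComplexOrder

noncomputable section

open ComplexStarModule

section Kronecker

variable {I J K : Type*} [Fintype I] [DecidableEq I] [Fintype J] [DecidableEq J]
  [Fintype K] [DecidableEq K]

lemma kron_tmul (A : HM I) (B : HM J) : (kron (A ⊗ₜ[ℝ] B)).1 = A.1 ⊗ₖ B.1 := rfl

lemma kron_map_compr (M : Matrix J K ℂ) (x : TensorProduct ℝ (HM I) (HM J)) :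
    (kron (TensorProduct.map LinearMap.id (compr M) x)).1
      = ((1 : Matrix I I ℂ) ⊗ₖ M)ᴴ * (kron x).1 * ((1 : Matrix I I ℂ) ⊗ₖ M) := by
  induction x using TensorProduct.induction_on with
  | zero => simp
  | tmul A B =>
    simp only [TensorProduct.map_tmul, LinearMap.id_apply, kron_tmul, conjTranspose_kronecker,
      conjTranspose_one, ← mul_kronecker_mul, Matrix.one_mul, Matrix.mul_one]
    rfl
  | add x y hx hy =>
    simp only [map_add, AddSubgroup.coe_add, hx, hy, Matrix.mul_add, Matrix.add_mul]

lemma realPart_kronecker (X : Matrix I I ℂ) (Y : Matrix J J ℂ) :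
    ℜ (X ⊗ₖ Y) = kron (ℜ X ⊗ₜ[ℝ] ℜ Y - ℑ X ⊗ₜ[ℝ] ℑ Y) := by
  ext1
  ext ⟨i, a⟩ ⟨j, b⟩
  simp only [map_sub, AddSubgroupClass.coe_sub, kron_tmul, realPart_apply_coe,
    imaginaryPart_apply_coe, star_eq_conjTranspose, Matrix.sub_apply, kroneckerMap_apply,
    Matrix.smul_apply, Matrix.add_apply, conjTranspose_apply, star_mul', smul_eq_mul,
    Complex.real_smul]
  push_cast
  linear_combination (X i j - star (X j i)) * (Y a b - star (Y b a)) / 4 *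
    Complex.I_sq

lemma kron_surjective : Function.Surjective (kron : TensorProduct ℝ (HM I) (HM J) →ₗ[ℝ] _) := by
  intro Z
  suffices ℜ (Z : Matrix (I × J) (I × J) ℂ) ∈ LinearMap.range kron by
    simpa using this
  rw [matrix_eq_sum_single (Z : Matrix (I × J) (I × J) ℂ)]
  simp only [map_sum]
  refine Submodule.sum_mem _ fun p _ => Submodule.sum_mem _ fun q _ => ?_
  rw [← mul_one (Z.1 p q), ← single_kronecker_single, realPart_kronecker]
  exact LinearMap.mem_range_self _ _

lemma kron_injective : Function.Injective (kron : TensorProduct ℝ (HM I) (HM J) →ₗ[ℝ] _) := by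
  rw [← LinearMap.ker_eq_bot, eq_bot_iff]
  intro z hz
  set b := Module.Basis.ofVectorSpace ℝ (HM I)
  obtain ⟨c, rfl⟩ := TensorProduct.eq_repr_basis_left b z
  have hslice : ∀ a a' : J, ∑ k ∈ c.support, (c k).1 a a' • (b k : Matrix I I ℂ) = 0 := by
    intro a a'
    ext i j
    have := congr($(LinearMap.mem_ker.mp hz).1 (i, a) (j, a'))
    simpa [Finsupp.sum, kron_tmul, Matrix.sum_apply, mul_comm ((b _ : Matrix I I ℂ) i j)] using this
  have hre : ∀ a a', ∑ k ∈ c.support, ((c k).1 a a').re • b k = 0 := fun a a' => by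
    simpa [realPart_smul] using congr(ℜ $(hslice a a'))
  have him : ∀ a a', ∑ k ∈ c.support, ((c k).1 a a').im • b k = 0 := fun a a' => by
    simpa [imaginaryPart_smul] using congr(ℑ $(hslice a a'))
  suffices c = 0 by simp [this]
  ext k a a'
  by_cases hk : k ∈ c.support
  · have hind := linearIndependent_iff'.mp b.linearIndependent c.support
    exact Complex.ext (hind _ (hre a a') k hk) (hind _ (him a a') k hk)
  · simp [Finsupp.notMem_support_iff.mp hk]

end Kronecker

def maxEntangled (I : Type*) [DecidableEq I] : I × I → ℂ := fun p => if p.1 = p.2 then 1 else 0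

def unvec {I J : Type*} (v : I × J → ℂ) : Matrix J I ℂ := Matrix.of fun a i => v (i, a)

section MaxEntangled

variable {I J : Type*} [Fintype I] [DecidableEq I]

lemma one_kronecker_unvec_mulVec_maxEntangled (v : I × J → ℂ) :
    ((1 : Matrix I I ℂ) ⊗ₖ unvec v) *ᵥ maxEntangled I = v := by
  ext ⟨i, a⟩
  simp [mulVec, dotProduct, Fintype.sum_prod_type, maxEntangled, unvec, one_apply]

lemma posSemidef_of_forall_one_kronecker_conj [Fintype J] {K : Matrix (I × J) (I × J) ℂ}
    (hK : K.IsHermitian)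
    (h : ∀ M : Matrix J I ℂ,
      (((1 : Matrix I I ℂ) ⊗ₖ M)ᴴ * K * ((1 : Matrix I I ℂ) ⊗ₖ M)).PosSemidef) :
    K.PosSemidef := by
  refine PosSemidef.of_dotProduct_mulVec_nonneg hK fun v => ?_
  have := (h (unvec v)).dotProduct_mulVec_nonneg (maxEntangled I)
  rwa [← mulVec_mulVec, ← mulVec_mulVec, dotProduct_mulVec, ← star_mulVec,
    one_kronecker_unvec_mulVec_maxEntangled] at this

lemma exists_eq_sum_one_kronecker_conj_maxEntangled [Fintype J] {K : Matrix (I × J) (I × J) ℂ}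
    (hK : K.PosSemidef) : ∃ (m : ℕ) (M : Fin m → Matrix J I ℂ),
      K = ∑ k, ((1 : Matrix I I ℂ) ⊗ₖ M k) * vecMulVec (maxEntangled I) (star (maxEntangled I))
        * ((1 : Matrix I I ℂ) ⊗ₖ M k)ᴴ := by
  obtain ⟨m, v, rfl⟩ := posSemidef_iff_eq_sum_vecMulVec.mp hK
  refine ⟨m, fun k => unvec (v k), Finset.sum_congr rfl fun k _ => ?_⟩
  rw [mul_vecMulVec, vecMulVec_mul, ← star_mulVec, one_kronecker_unvec_mulVec_maxEntangled]

end MaxEntangled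

namespace AOS

variable {X : Type*} [AddCommGroup X] [Module ℝ X]

def pointedCone (C : AOS X) (s : ℕ) : PointedCone ℝ (TensorProduct ℝ X (HM (Fin s))) where
  carrier := C.cone s
  add_mem' ha hb := (C.proper s).1 _ ha _ hb
  zero_mem' := by
    obtain ⟨a, ha, -⟩ := (C.proper s).2.2.2.2 0
    simpa using (C.proper s).2.1 0 le_rfl a ha
  smul_mem' c _ hx := (C.proper s).2.1 c c.2 _ hx

lemma sum_mem (C : AOS X) {s : ℕ} {ι : Type*} (t : Finset ι)
    {f : ι → TensorProduct ℝ X (HM (Fin s))} (h : ∀ i ∈ t, f i ∈ C.cone s) :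
    ∑ i ∈ t, f i ∈ C.cone s :=
  (C.pointedCone s).sum_mem (f := f) h

end AOS

/-- inclusion detected at one level: for an abstract operator system `C` on
`X = Her_d` (identifying `Her_d ⊗ Her_s ≅ Her_{ds}` via the Kronecker product):
(i) if `C(d) ⊆ Psd_{d²}` then `C(s) ⊆ Psd_{ds}` for all `s`;
(ii) if `Psd_{d²} ⊆ C(d)` then `Psd_{ds} ⊆ C(s)` for all `s`. -/
theorem inclusion_detected_at_one_level (d : ℕ) (C : AOS (HM (Fin d))) :
    ((∀ A ∈ C.cone d, (kron A).1.PosSemidef) →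
      ∀ s : ℕ, ∀ A ∈ C.cone s, (kron A).1.PosSemidef) ∧
    ((∀ x : TensorProduct ℝ (HM (Fin d)) (HM (Fin d)),
        (kron x).1.PosSemidef → x ∈ C.cone d) →
      ∀ s : ℕ, ∀ x : TensorProduct ℝ (HM (Fin d)) (HM (Fin s)),
        (kron x).1.PosSemidef → x ∈ C.cone s) := by
  refine ⟨fun hC s A hA => ?_, fun hC s x hx => ?_⟩
  · refine posSemidef_of_forall_one_kronecker_conj (kron A).2 fun M => ?_
    rw [← kron_map_compr]
    exact hC _ (C.compat s d M A hA)
  · obtain ⟨P, hP⟩ := kron_surjective (I := Fin d) (J := Fin d)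
      ⟨_, (posSemidef_vecMulVec_self_star (maxEntangled (Fin d))).isHermitian⟩
    have hPC : P ∈ C.cone d := hC P (by rw [hP]; exact posSemidef_vecMulVec_self_star _)
    obtain ⟨m, M, hM⟩ := exists_eq_sum_one_kronecker_conj_maxEntangled hx
    have hx_eq : x = ∑ k, TensorProduct.map LinearMap.id (compr (M k)ᴴ) P := by
      refine kron_injective (Subtype.ext ?_)
      simp only [hM, map_sum, AddSubmonoidClass.coe_finsetSum, kron_map_compr, hP,
        conjTranspose_kronecker, conjTranspose_one, conjTranspose_conjTranspose]
    rw [hx_eq]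
    exact C.sum_mem _ fun k _ => C.compat d s _ P hPC
end
end
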